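/- arXiv:2010.08044 — 2 statements merged into one kernel-verified Lean document; each statement's English description precedes it below -/
import Mathlib

section
/- Suppose ≿ is a complete transitive relation on {0,1}^ℕ satisfying Weak Upper Asymptotic Pareto and Anonymity. Then the map assigning to each r ∈ (0,1) the pair of streams (x(r), z(r)) constructed from a fixed enumeration of the rationals yields, for any r < s in (0,1), the strict chain x(r) ≺ z(r) ≺' x(s) ≺ z(s) (where ≺' may pass through an intermediate anonymity-equivalent stream). Consequently, if W represents ≿, the open intervals (W(x(r)), W(z(r))), r ∈ (0,1), are pairwise disjoint and nonempty. -/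
/-!
Write `I_l = [l!, (l + 1)!)`. A set of indices containing infinitely many whole blocks `I_l` has
upper density one, because `I_l` fills all but a fraction `1 / (l + 1)` of `[1, (l + 1)!]`.
Hence if `B ⊇ A` with `B \ A` infinite, the stream that is `1` on the blocks indexed by `B`
strictly dominates the one for `A` by Weak Upper Asymptotic Pareto. This gives `x(r) ≺ z(r)`,
with `B \ A` the infinitely many records `n_k(r)`. For `r < s`, the blocks of `z(r)` not in
`x(s)` are the finitely many records with value `≥ s`, while infinitely many non-record indices
with value in `(r, s)` are blocks of `x(s)` only; finitely many transpositions (anonymity) move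
the surplus of `z(r)` into the latter, and Pareto again gives `z(r) ≺ x(s)`.
-/
open Filter Topology

noncomputable def upperDensity (S : Set ℕ) : ℝ :=
  Filter.limsup (fun n : ℕ => (Nat.card (↥(S ∩ Set.Icc 1 n)) : ℝ) / (n : ℝ)) Filter.atTop

open Set Nat

def factorialBlock (l : ℕ) : Set ℕ := Ico l ! (l + 1)!

lemma le_of_mem_factorialBlock {l i : ℕ} (hi : i ∈ factorialBlock l) : l ≤ i :=
  (self_le_factorial l).trans hi.1

lemma factorial_mem_factorialBlock {l : ℕ} (hl : 0 < l) : l ! ∈ factorialBlock l :=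
  ⟨le_rfl, (factorial_lt hl).2 l.lt_succ_self⟩

lemma factorialBlock_disjoint {l m : ℕ} (h : l ≠ m) :
    Disjoint (factorialBlock l) (factorialBlock m) := by
  wlog hlm : l < m generalizing l m
  · exact (this h.symm (h.lt_or_gt.resolve_left hlm)).symm
  exact disjoint_left.2 fun i hi hi' => (hi.2.trans_le (factorial_le hlm)).not_ge hi'.1

lemma le_countingRatio_of_factorialBlock_subset {S : Set ℕ} {l : ℕ}
    (hS : factorialBlock l ⊆ S) :
    (l : ℝ) / (l + 1) ≤ (Nat.card ↥(S ∩ Icc 1 (l + 1)!) : ℝ) / ((l + 1)! : ℕ) := by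
  have hsub : factorialBlock l ⊆ S ∩ Icc 1 (l + 1)! := fun i hi =>
    ⟨hS hi, (factorial_pos l).trans_le hi.1, hi.2.le⟩
  have hcard : (l + 1)! - l ! ≤ Nat.card ↥(S ∩ Icc 1 (l + 1)!) := by
    rw [← ncard_Ico_nat, ← Nat.card_coe_set_eq]
    exact Nat.card_mono ((finite_Icc _ _).inter_of_right S) hsub
  have hcast : (((l + 1)! - l ! : ℕ) : ℝ) = l * l ! := by
    rw [Nat.cast_sub (factorial_le l.le_succ), factorial_succ]; push_cast; ring
  have hN : (l : ℝ) * l ! ≤ Nat.card ↥(S ∩ Icc 1 (l + 1)!) := hcast ▸ Nat.cast_le.2 hcard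
  have hfac : (((l + 1)! : ℕ) : ℝ) = (l + 1) * l ! := by rw [factorial_succ]; push_cast; ring
  rw [div_le_div_iff₀ (by positivity) (by positivity), hfac]
  nlinarith

lemma upperDensity_eq_one_of_factorialBlock_subset {S L : Set ℕ} (hL : L.Infinite)
    (hS : ∀ l ∈ L, factorialBlock l ⊆ S) : upperDensity S = 1 := by
  set f : ℕ → ℝ := fun n => (Nat.card ↥(S ∩ Icc 1 n) : ℝ) / n
  have hf_le : ∀ n, f n ≤ 1 := fun n => by
    refine div_le_one_of_le₀ ?_ n.cast_nonneg
    calc (Nat.card ↥(S ∩ Icc 1 n) : ℝ) ≤ Nat.card ↥(Icc 1 n) :=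
          Nat.cast_le.2 (Nat.card_mono (finite_Icc 1 n) inter_subset_right)
      _ = n := by simp
  have hf_nonneg : ∀ n, 0 ≤ f n := fun n => by positivity
  refine le_antisymm (limsup_le_of_le (isBoundedUnder_of ⟨0, hf_nonneg⟩).isCoboundedUnder_le
    (.of_forall hf_le)) (le_of_forall_lt_imp_le_of_dense fun c hc => ?_)
  obtain ⟨k, hk⟩ := exists_nat_gt (1 / (1 - c))
  refine le_limsup_of_frequently_le (frequently_atTop.2 fun a => ?_)
    (isBoundedUnder_of ⟨1, hf_le⟩)
  obtain ⟨l, hlL, hl⟩ := hL.exists_gt (max a k)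
  have hal : a ≤ l := ((le_max_left a k).trans_lt hl).le
  refine ⟨(l + 1)!, hal.trans (l.le_succ.trans (self_le_factorial _)), ?_⟩
  refine le_trans ?_ (le_countingRatio_of_factorialBlock_subset (hS l hlL))
  have hc' : 0 < 1 - c := sub_pos.2 hc
  have hk' : 1 < k * (1 - c) := by rwa [div_lt_iff₀ hc'] at hk
  have hkl : (k : ℝ) < l := by exact_mod_cast (le_max_right a k).trans_lt hl
  rw [le_div_iff₀ (by positivity)]
  nlinarith

def Anonymity (R : (ℕ → Fin 2) → (ℕ → Fin 2) → Prop) : Prop :=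
  ∀ (x : ℕ → Fin 2) (i j : ℕ), R x (x ∘ Equiv.swap i j) ∧ R (x ∘ Equiv.swap i j) x

def WeakUpperAsymptoticPareto (R : (ℕ → Fin 2) → (ℕ → Fin 2) → Prop) : Prop :=
  ∀ x y : ℕ → Fin 2, (∀ i, y i ≤ x i) →
    ∀ S : Set ℕ, upperDensity S = 1 → (∀ i ∈ S, y i < x i) → (R x y ∧ ¬ R y x)

section Preference

variable {R : (ℕ → Fin 2) → (ℕ → Fin 2) → Prop}

/-- Finitely many excess coordinates of `v` over `u` can be swapped, one at a time, into
coordinates where `u` exceeds `v`. -/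
lemma exists_indiff_le_of_finite_excess (hrefl : ∀ x, R x x)
    (htrans : ∀ x y z, R x y → R y z → R x z) (hAN : Anonymity R) (u : ℕ → Fin 2)
    (D : Finset ℕ) : ∀ v : ℕ → Fin 2, (∀ i ∉ D, v i ≤ u i) → {i | v i < u i}.Infinite →
      ∃ w, R v w ∧ R w v ∧ (∀ i, w i ≤ u i) ∧ {i | w i ≠ v i}.Finite := by
  induction D using Finset.induction_on with
  | empty =>
    exact fun v hv _ => ⟨v, hrefl v, hrefl v, fun i => hv i (Finset.notMem_empty i), by simp⟩
  | insert a D ha ih =>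
    intro v hv hinf
    obtain ⟨g, hg, hga⟩ := (hinf.sdiff (finite_singleton a)).nonempty
    have hg' : v g = 0 ∧ u g = 1 := by have : v g < u g := hg; omega
    set v' := v ∘ Equiv.swap a g
    have hv' : ∀ i ∉ D, v' i ≤ u i := fun i hi => by
      simp only [v', Function.comp_apply]
      rcases eq_or_ne i a with rfl | hia
      · rw [Equiv.swap_apply_left, hg'.1]; exact Fin.zero_le _
      rcases eq_or_ne i g with rfl | hig
      · rw [Equiv.swap_apply_right, hg'.2]; exact Fin.le_last _
      rw [Equiv.swap_apply_of_ne_of_ne hia hig]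
      exact hv i (by simp [hia, hi])
    have hinf' : {i | v' i < u i}.Infinite := by
      refine (hinf.sdiff (toFinite {a, g})).mono fun i hi => ?_
      obtain ⟨hi, hiag⟩ := hi
      simp only [mem_insert_iff, mem_singleton_iff, not_or] at hiag
      simpa [v', Equiv.swap_apply_of_ne_of_ne hiag.1 hiag.2] using hi
    obtain ⟨w, hv'w, hwv', hwu, hfin⟩ := ih v' hv' hinf'
    refine ⟨w, htrans _ _ _ (hAN v a g).1 hv'w, htrans _ _ _ hwv' (hAN v a g).2, hwu,
      (hfin.union (toFinite {a, g})).subset fun i hi => ?_⟩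
    by_contra h
    simp only [mem_union, mem_insert_iff, mem_singleton_iff, not_or] at h
    exact hi ((not_not.1 h.1).trans (by simp [v', Equiv.swap_apply_of_ne_of_ne h.2.1 h.2.2]))

/-- After moving the finite excess of `v` by anonymity, all but finitely many of the blocks on
which `u` exceeds `v` are untouched, so Weak Upper Asymptotic Pareto applies. -/
lemma strictPref_of_finite_excess (hrefl : ∀ x, R x x)
    (htrans : ∀ x y z, R x y → R y z → R x z) (hWUAP : WeakUpperAsymptoticPareto R)
    (hAN : Anonymity R) {u v : ℕ → Fin 2} (hD : {i | u i < v i}.Finite) {L : Set ℕ}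
    (hL : L.Infinite) (hLuv : ∀ l ∈ L, ∀ i ∈ factorialBlock l, v i < u i) :
    R u v ∧ ¬ R v u := by
  have hinf : {i | v i < u i}.Infinite := infinite_of_forall_exists_gt fun N => by
    obtain ⟨l, hlL, hNl⟩ := hL.exists_gt N
    have hl := factorial_mem_factorialBlock (N.zero_le.trans_lt hNl)
    exact ⟨l !, hLuv l hlL _ hl, hNl.trans_le (le_of_mem_factorialBlock hl)⟩
  obtain ⟨w, hvw, hwv, hwu, hfin⟩ := exists_indiff_le_of_finite_excess hrefl htrans hAN u
    hD.toFinset v (fun i hi => not_lt.1 fun h => hi (hD.mem_toFinset.2 h)) hinf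
  obtain ⟨M, hM⟩ := hfin.bddAbove
  have hS : upperDensity {i | w i < u i} = 1 := by
    refine upperDensity_eq_one_of_factorialBlock_subset (hL.sdiff (finite_Iic M))
      fun l ⟨hlL, hlM⟩ i hi => ?_
    have hiM : ¬ i ≤ M := fun h => hlM ((le_of_mem_factorialBlock hi).trans h)
    have hwi : w i = v i := not_not.1 fun h => hiM (hM h)
    exact (hwi ▸ hLuv l hlL i hi : w i < u i)
  have huw := hWUAP u w hwu _ hS fun _ hi => hi
  exact ⟨htrans _ _ _ huw.1 hwv, fun hvu => huw.2 (htrans _ _ _ hwv hvu)⟩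

end Preference

noncomputable def blockStream (A : Set ℕ) : ℕ → Fin 2 :=
  (⋃ l ∈ A, factorialBlock l).indicator 1

lemma blockStream_of_mem {A : Set ℕ} {l i : ℕ} (hl : l ∈ A) (hi : i ∈ factorialBlock l) :
    blockStream A i = 1 :=
  indicator_of_mem (mem_biUnion hl hi) _

lemma blockStream_of_notMem {A : Set ℕ} {l i : ℕ} (hl : l ∉ A) (hi : i ∈ factorialBlock l) :
    blockStream A i = 0 := by
  refine indicator_of_notMem (fun h => ?_) _
  obtain ⟨m, hm, him⟩ := mem_iUnion₂.1 h
  have hml : m = l := by_contra fun hne => disjoint_left.1 (factorialBlock_disjoint hne) him hi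
  exact hl (hml ▸ hm)

lemma setOf_blockStream_lt_subset (A B : Set ℕ) :
    {i | blockStream B i < blockStream A i} ⊆ ⋃ l ∈ A \ B, factorialBlock l := by
  intro i (hi : blockStream B i < blockStream A i)
  have hA : blockStream A i ≠ 0 := (Fin.zero_le _).trans_lt hi |>.ne'
  obtain ⟨l, hlA, hil⟩ := mem_iUnion₂.1 (mem_of_indicator_ne_zero hA)
  refine mem_biUnion ⟨hlA, fun hlB => ?_⟩ hil
  exact (blockStream_of_mem hlB hil ▸ hi).not_ge (Fin.le_last _)

lemma blockStream_strictPref {R : (ℕ → Fin 2) → (ℕ → Fin 2) → Prop} (hrefl : ∀ x, R x x)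
    (htrans : ∀ x y z, R x y → R y z → R x z) (hWUAP : WeakUpperAsymptoticPareto R)
    (hAN : Anonymity R) {A B : Set ℕ} (hAB : (A \ B).Finite) (hBA : (B \ A).Infinite) :
    R (blockStream B) (blockStream A) ∧ ¬ R (blockStream A) (blockStream B) :=
  strictPref_of_finite_excess hrefl htrans hWUAP hAN
    ((hAB.biUnion fun _ _ => finite_Ico _ _).subset (setOf_blockStream_lt_subset A B)) hBA
    fun _ hl _ hi => by
      rw [blockStream_of_mem hl.1 hi, blockStream_of_notMem hl.2 hi]; exact Fin.zero_lt_one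

section Records

variable {q : ℕ → ℚ}

/-- The indices `n₁ < n₂ < ⋯` at which `q` takes a new minimum among its values above `r`;
along them `q` decreases strictly to `r`. -/
def recordsAbove (q : ℕ → ℚ) (r : ℝ) : Set ℕ :=
  {l | r < q l ∧ ∀ m < l, r < q m → (q l : ℝ) < q m}

lemma infinite_setOf_mem_Ioo (hq : Icc (0 : ℚ) 1 ⊆ range q) {a b : ℝ} (ha : 0 ≤ a)
    (hab : a < b) (hb : b ≤ 1) : {l | (q l : ℝ) ∈ Ioo a b}.Infinite := by
  obtain ⟨a', ha'⟩ := exists_rat_btwn hab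
  obtain ⟨b', hb'⟩ := exists_rat_btwn ha'.2
  have hsub : Ioo a' b' ⊆ range q := fun t ht =>
    hq ⟨Rat.cast_nonneg.1 (ha.trans (ha'.1.trans (Rat.cast_lt.2 ht.1)).le),
      by exact_mod_cast (((Rat.cast_lt.2 ht.2).trans hb'.2).le.trans hb : (t : ℝ) ≤ 1)⟩
  refine ((Ioo_infinite (Rat.cast_lt.1 hb'.1)).preimage hsub).mono fun l hl => ?_
  exact ⟨ha'.1.trans (Rat.cast_lt.2 hl.1), (Rat.cast_lt.2 hl.2).trans hb'.2⟩

/-- Beyond any `M`, the first index whose value lies strictly between `r` and all values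
above `r` taken up to `M` is a record. -/
lemma recordsAbove_infinite (hq : Icc (0 : ℚ) 1 ⊆ range q) {r : ℝ} (hr0 : 0 ≤ r)
    (hr1 : r < 1) : (recordsAbove q r).Infinite := by
  refine infinite_of_forall_exists_gt fun M => ?_
  have hgap : ∀ᶠ v : ℝ in 𝓝[>] r,
      v ≤ 1 ∧ ∀ m ∈ Finset.range (M + 1), r < q m → v < q m := by
    refine ((eventually_le_nhds hr1).and ?_).filter_mono nhdsWithin_le_nhds
    rw [Filter.eventually_all_finset]
    intro m _
    by_cases hm : r < q m
    · exact (eventually_lt_nhds hm).mono fun _ hv _ => hv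
    · exact .of_forall fun _ h => absurd h hm
  obtain ⟨v, ⟨hv1, hvM⟩, hrv⟩ := (hgap.and self_mem_nhdsWithin).exists
  have hex : ∃ l, (q l : ℝ) ∈ Ioo r v :=
    (infinite_setOf_mem_Ioo hq hr0 hrv hv1).nonempty
  classical
  refine ⟨Nat.find hex, ⟨(Nat.find_spec hex).1, fun m hm hrm => ?_⟩, ?_⟩
  · have hvm : v ≤ q m := not_lt.1 fun h => Nat.find_min hex hm ⟨hrm, h⟩
    exact (Nat.find_spec hex).2.trans_le hvm
  · by_contra! h
    exact (hvM _ (Finset.mem_range.2 (Nat.lt_succ_of_le h)) (Nat.find_spec hex).1).not_gt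
      (Nat.find_spec hex).2

lemma finite_recordsAbove_ge {r s : ℝ} {m : ℕ} (hm : (q m : ℝ) ∈ Ioo r s) :
    {l ∈ recordsAbove q r | s ≤ q l}.Finite :=
  (finite_Iic m).subset fun _ ⟨hl, hsl⟩ => not_lt.1 fun hml =>
    (hl.2 m hml hm.1).not_ge (hm.2.le.trans hsl)

lemma infinite_setOf_mem_Ioo_notMem_recordsAbove (hq : Icc (0 : ℚ) 1 ⊆ range q) {r s : ℝ}
    (hr : 0 ≤ r) (hrs : r < s) (hs : s ≤ 1) :
    {l | (q l : ℝ) ∈ Ioo r s ∧ l ∉ recordsAbove q r}.Infinite := by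
  refine infinite_of_forall_exists_gt fun M => ?_
  obtain ⟨l, hl, hMl⟩ := (infinite_setOf_mem_Ioo hq hr hrs hs).exists_gt M
  by_cases hrec : l ∈ recordsAbove q r
  · obtain ⟨m, hm, hlm⟩ := (infinite_setOf_mem_Ioo hq (hr.trans hl.1.le) hl.2 hs).exists_gt l
    exact ⟨m, ⟨⟨hl.1.trans hm.1, hm.2⟩, fun hmrec => (hmrec.2 l hlm hl.1).not_gt hm.1⟩,
      hMl.trans hlm⟩
  · exact ⟨l, ⟨hl, hrec⟩, hMl⟩

end Records

lemma pairwiseDisjoint_Ioo_of_le {ι α : Type*} [LinearOrder ι] [Preorder α] {I : Set ι}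
    {a b : ι → α} (h : ∀ r ∈ I, ∀ s ∈ I, r < s → b r ≤ a s) :
    I.PairwiseDisjoint fun r => Ioo (a r) (b r) := by
  intro r hr s hs hne
  wlog hrs : r < s generalizing r s
  · exact (this hs hr hne.symm (hne.lt_or_gt.resolve_left hrs)).symm
  exact disjoint_left.2 fun t ht ht' => (ht.2.trans_le (h r hr s hs hrs)).not_gt ht'.1

theorem stmt_10_general (R : (ℕ → Fin 2) → (ℕ → Fin 2) → Prop)
    (htotal : ∀ x y, R x y ∨ R y x)
    (htrans : ∀ x y z, R x y → R y z → R x z)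
    (hWUAP : ∀ x y : ℕ → Fin 2, (∀ i, y i ≤ x i) →
      ∀ S : Set ℕ, upperDensity S = 1 → (∀ i ∈ S, y i < x i) → (R x y ∧ ¬ R y x))
    (hAN : ∀ (x : ℕ → Fin 2) (i j : ℕ),
      R x (x ∘ Equiv.swap i j) ∧ R (x ∘ Equiv.swap i j) x)
    (q : ℕ → ℚ)
    (hq' : Set.range q = {p : ℚ | 0 ≤ p ∧ p ≤ 1}) :
    ∃ x z : ℝ → (ℕ → Fin 2),
      (∀ r ∈ Set.Ioo (0 : ℝ) 1, R (z r) (x r) ∧ ¬ R (x r) (z r)) ∧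
      (∀ r ∈ Set.Ioo (0 : ℝ) 1, ∀ s ∈ Set.Ioo (0 : ℝ) 1, r < s →
        R (x s) (z r) ∧ ¬ R (z r) (x s)) ∧
      (∀ W : (ℕ → Fin 2) → ℝ, (∀ u v, R u v ↔ W v ≤ W u) →
        (∀ r ∈ Set.Ioo (0 : ℝ) 1, W (x r) < W (z r)) ∧
        (∀ r ∈ Set.Ioo (0 : ℝ) 1, ∀ s ∈ Set.Ioo (0 : ℝ) 1, r ≠ s →
          Disjoint (Set.Ioo (W (x r)) (W (z r))) (Set.Ioo (W (x s)) (W (z s))))) := by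
  have hrefl : ∀ x, R x x := fun x => (htotal x x).elim id id
  have hq : Icc (0 : ℚ) 1 ⊆ range q := hq'.ge
  set x : ℝ → ℕ → Fin 2 := fun r => blockStream {l | (q l : ℝ) ∈ Ioo 0 r}
  set z : ℝ → ℕ → Fin 2 := fun r => blockStream ({l | (q l : ℝ) ∈ Ioo 0 r} ∪ recordsAbove q r)
  have hxz : ∀ r ∈ Ioo (0 : ℝ) 1, R (z r) (x r) ∧ ¬ R (x r) (z r) := fun r hr =>
    blockStream_strictPref hrefl htrans hWUAP hAN
      (finite_empty.subset fun _ hl => hl.2 (.inl hl.1))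
      ((recordsAbove_infinite hq hr.1.le hr.2).mono fun _ hl => ⟨.inr hl, fun h => h.2.not_gt hl.1⟩)
  have hzx : ∀ r ∈ Ioo (0 : ℝ) 1, ∀ s ∈ Ioo (0 : ℝ) 1, r < s →
      R (x s) (z r) ∧ ¬ R (z r) (x s) := by
    intro r hr s hs hrs
    obtain ⟨m, hm⟩ := (infinite_setOf_mem_Ioo hq hr.1.le hrs hs.2.le).nonempty
    refine blockStream_strictPref hrefl htrans hWUAP hAN ((finite_recordsAbove_ge hm).subset ?_)
      ((infinite_setOf_mem_Ioo_notMem_recordsAbove hq hr.1.le hrs hs.2.le).mono ?_)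
    · rintro l ⟨hl | hl, hls⟩
      · exact absurd ⟨hl.1, hl.2.trans hrs⟩ hls
      · exact ⟨hl, not_lt.1 fun h => hls ⟨hr.1.trans hl.1, h⟩⟩
    · rintro l ⟨hl, hrec⟩
      exact ⟨⟨hr.1.trans hl.1, hl.2⟩, fun h => h.elim (fun h => h.2.not_gt hl.1) hrec⟩
  refine ⟨x, z, hxz, hzx, fun W hW => ⟨fun r hr => ?_, ?_⟩⟩
  · exact not_le.1 fun h => (hxz r hr).2 ((hW _ _).2 h)
  · exact pairwiseDisjoint_Ioo_of_le fun r hr s hs hrs => (hW _ _).1 (hzx r hr s hs hrs).1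

/-- given a complete transitive relation R on {0,1}^ℕ satisfying
Weak Upper Asymptotic Pareto and Anonymity, and a fixed enumeration of the
rationals of [0,1], there are families r ↦ x(r), r ↦ z(r) of streams such that
for all r < s in (0,1) one has the strict chain
x(r) ≺ z(r) ≺ x(s) ≺ z(s); consequently, for any W representing R the open
intervals (W(x(r)), W(z(r))), r ∈ (0,1), are nonempty and pairwise disjoint. -/
theorem stmt_10 (R : (ℕ → Fin 2) → (ℕ → Fin 2) → Prop)
    (htotal : ∀ x y, R x y ∨ R y x)
    (htrans : ∀ x y z, R x y → R y z → R x z)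
    (hWUAP : ∀ x y : ℕ → Fin 2, (∀ i, y i ≤ x i) →
      ∀ S : Set ℕ, upperDensity S = 1 → (∀ i ∈ S, y i < x i) → (R x y ∧ ¬ R y x))
    (hAN : ∀ (x : ℕ → Fin 2) (i j : ℕ),
      R x (x ∘ Equiv.swap i j) ∧ R (x ∘ Equiv.swap i j) x)
    (q : ℕ → ℚ) (hq : Function.Injective q)
    (hq' : Set.range q = {p : ℚ | 0 ≤ p ∧ p ≤ 1}) :
    ∃ x z : ℝ → (ℕ → Fin 2),
      (∀ r ∈ Set.Ioo (0 : ℝ) 1, R (z r) (x r) ∧ ¬ R (x r) (z r)) ∧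
      (∀ r ∈ Set.Ioo (0 : ℝ) 1, ∀ s ∈ Set.Ioo (0 : ℝ) 1, r < s →
        R (x s) (z r) ∧ ¬ R (z r) (x s)) ∧
      (∀ W : (ℕ → Fin 2) → ℝ, (∀ u v, R u v ↔ W v ≤ W u) →
        (∀ r ∈ Set.Ioo (0 : ℝ) 1, W (x r) < W (z r)) ∧
        (∀ r ∈ Set.Ioo (0 : ℝ) 1, ∀ s ∈ Set.Ioo (0 : ℝ) 1, r ≠ s →
          Disjoint (Set.Ioo (W (x r)) (W (z r))) (Set.Ioo (W (x s)) (W (z s))))) :=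
  stmt_10_general R htotal htrans hWUAP hAN q hq'
end

section
/- Let Y = {a,b} with a < b and suppose there exists a social welfare order on Y^ℕ satisfying Upper Asymptotic Pareto and Anonymity. Then there exists a non-Ramsey set, i.e., a collection Γ of infinite subsets of ℕ such that for every infinite T ⊆ ℕ, the family of infinite subsets of T meets both Γ and its complement. -/
/-!
For an infinite `A = {a₀ < a₁ < ⋯}` let `W(A) = [a₀, a₁) ∪ [a₂, a₃) ∪ ⋯`, and let `Γ` consist of
the `A` for which the stream that is `b` on `W(A)` and `a` off it is strictly preferred to the
stream of `W(A)ᶜ`.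

Anonymity makes Upper Asymptotic Pareto tolerate finitely many exceptions: if `X \ Y` is finite
and `Y \ X` has positive upper density, then `Y ≻ X`, by swapping the points of `X \ Y` one at a
time into `Y \ X`. Given an infinite `T`, choose `0 = s 0 < s 1 < ⋯` with `s (m + 1) ∈ T` and
`s (m + 1) > 2 s m`. Then `W` of an infinite subset of `T` can be any union of blocks
`[s m, s (m + 1))` over an index set `I ∌ 0` with `I` and `Iᶜ` infinite (take the image under `s`
of the points where membership in `I` switches), and a union over infinitely many blocks has
upper density `≥ 1/2`.
Two index sets with disjoint patterns leaving infinitely many blocks uncovered give sets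
`X, Y` with `Xᶜ ≻ Y` and `Yᶜ ≻ X`: if both were in `Γ` this yields the cycle
`X ≽ Xᶜ ≻ Y ≽ Yᶜ ≻ X`, and the complementary patterns give the same cycle if neither were.
-/

open Filter Topology

noncomputable def countingRatio (S : Set ℕ) (n : ℕ) : ℝ := (Nat.card ↥(S ∩ Set.Icc 1 n) : ℝ) / n

theorem upperDensity_eq_limsup (S : Set ℕ) :
    upperDensity S = limsup (countingRatio S) atTop := rfl

theorem countingRatio_nonneg (S : Set ℕ) (n : ℕ) : 0 ≤ countingRatio S n := by
  unfold countingRatio; positivity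

theorem countingRatio_le_one (S : Set ℕ) (n : ℕ) : countingRatio S n ≤ 1 := by
  rcases Nat.eq_zero_or_pos n with rfl | hn
  · simp [countingRatio]
  rw [countingRatio, div_le_one (by exact_mod_cast hn), Nat.card_coe_set_eq]
  calc ((S ∩ Set.Icc 1 n).ncard : ℝ) ≤ (Set.Icc 1 n).ncard := by
        exact_mod_cast Set.ncard_le_ncard Set.inter_subset_right (Set.finite_Icc 1 n)
    _ = n := by simp [← Finset.coe_Icc, Set.ncard_coe_finset]

theorem le_upperDensity_of_frequently {S : Set ℕ} {c : ℝ}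
    (h : ∃ᶠ n in atTop, c ≤ countingRatio S n) : c ≤ upperDensity S :=
  le_limsup_of_frequently_le h (isBoundedUnder_of ⟨1, countingRatio_le_one S⟩)

theorem frequently_lt_of_lt_upperDensity {S : Set ℕ} {c : ℝ} (h : c < upperDensity S) :
    ∃ᶠ n in atTop, c < countingRatio S n :=
  frequently_lt_of_lt_limsup (isCoboundedUnder_le_of_le atTop (countingRatio_nonneg S)) h

theorem upperDensity_empty : upperDensity ∅ = 0 := by
  have : countingRatio ∅ = 0 := funext fun n => by simp [countingRatio]
  rw [upperDensity_eq_limsup, this, Pi.zero_def, limsup_const]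

theorem nonempty_of_upperDensity_pos {S : Set ℕ} (h : 0 < upperDensity S) : S.Nonempty :=
  Set.nonempty_iff_ne_empty.2 fun hS => h.ne' (hS ▸ upperDensity_empty)

theorem upperDensity_diff_pos {S G : Set ℕ} (hS : 0 < upperDensity S) (hG : G.Finite) :
    0 < upperDensity (S \ G) := by
  have hcount (n : ℕ) : countingRatio S n - G.ncard / n ≤ countingRatio (S \ G) n := by
    simp only [countingRatio, Nat.card_coe_set_eq, ← sub_div]
    gcongr
    have hsub : S ∩ Set.Icc 1 n ⊆ ((S \ G) ∩ Set.Icc 1 n) ∪ G := fun x hx => by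
      by_cases hx' : x ∈ G <;> simp_all
    have : (S ∩ Set.Icc 1 n).ncard ≤ ((S \ G) ∩ Set.Icc 1 n).ncard + G.ncard :=
      (Set.ncard_le_ncard hsub (((Set.finite_Icc 1 n).inter_of_right _).union hG)).trans
        (Set.ncard_union_le _ _)
    rw [sub_le_iff_le_add]
    exact_mod_cast this
  have hsmall : ∀ᶠ n : ℕ in atTop, (G.ncard : ℝ) / n < upperDensity S / 4 :=
    (tendsto_const_div_atTop_nhds_zero_nat _).eventually (gt_mem_nhds (by positivity))
  have hfreq := frequently_lt_of_lt_upperDensity (half_lt_self hS)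
  refine (by positivity : (0 : ℝ) < upperDensity S / 4).trans_le
    (le_upperDensity_of_frequently ((hfreq.and_eventually hsmall).mono ?_))
  rintro n ⟨hn, hGn⟩
  linarith [hcount n]

/-- `r P Q` reads: the `{a, b}`-stream equal to `b` exactly on `P` is weakly preferred to the one
of `Q`. -/
structure IsAnonymousUAPOrder (r : Set ℕ → Set ℕ → Prop) : Prop where
  total (P Q : Set ℕ) : r P Q ∨ r Q P
  trans {P Q S : Set ℕ} : r P Q → r Q S → r P S
  le_swap_preimage (P : Set ℕ) (i j : ℕ) : r P (Equiv.swap i j ⁻¹' P)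
  not_le_of_subset {P Q : Set ℕ} : Q ⊆ P → 0 < upperDensity (P \ Q) → ¬ r Q P

theorem swap_preimage_sdiff {X Y : Set ℕ} {i j : ℕ} (hi : i ∈ X \ Y) (hj : j ∈ Y \ X) :
    Equiv.swap i j ⁻¹' X \ Y = (X \ Y) \ {i} ∧ Y \ Equiv.swap i j ⁻¹' X = (Y \ X) \ {j} := by
  have hij : i ≠ j := fun h => hi.2 (h ▸ hj.1)
  constructor <;> ext n <;> rcases eq_or_ne n i with rfl | hni <;>
    rcases eq_or_ne n j with rfl | hnj <;> simp_all [Equiv.swap_apply_of_ne_of_ne]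

namespace IsAnonymousUAPOrder

variable {r : Set ℕ → Set ℕ → Prop}

theorem not_le_of_finite_sdiff (hr : IsAnonymousUAPOrder r) {X Y : Set ℕ} (hXY : (X \ Y).Finite)
    (hYX : 0 < upperDensity (Y \ X)) : ¬ r X Y := by
  induction h : (X \ Y).ncard generalizing X with
  | zero => exact hr.not_le_of_subset (Set.sdiff_eq_empty.1 ((Set.ncard_eq_zero hXY).1 h)) hYX
  | succ n ih =>
    obtain ⟨i, hi⟩ := Set.nonempty_of_ncard_ne_zero (by rw [h]; exact n.succ_ne_zero)
    obtain ⟨j, hj⟩ := nonempty_of_upperDensity_pos hYX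
    obtain ⟨hX'Y, hYX'⟩ := swap_preimage_sdiff hi hj
    have hX'X : r (Equiv.swap i j ⁻¹' X) X := by
      simpa [Set.preimage_preimage] using hr.le_swap_preimage (Equiv.swap i j ⁻¹' X) i j
    refine fun hXY' => ih (hX'Y ▸ hXY.sdiff) ?_ ?_ (hr.trans hX'X hXY')
    · exact hYX' ▸ upperDensity_diff_pos hYX (Set.finite_singleton j)
    · rw [hX'Y, Set.ncard_sdiff_singleton_of_mem hi, h, Nat.add_sub_cancel]

theorem not_and_le_compl (hr : IsAnonymousUAPOrder r) {X Y : Set ℕ} (hXY : (X ∩ Y).Finite)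
    (hd : 0 < upperDensity (X ∪ Y)ᶜ) : ¬ (r X Xᶜ ∧ r Y Yᶜ) := by
  rintro ⟨hX, hY⟩
  have hXY' : ¬ r X Yᶜ :=
    hr.not_le_of_finite_sdiff (by rwa [sdiff_compl])
      (by rwa [Set.compl_union, Set.inter_comm] at hd)
  have hYX' : ¬ r Y Xᶜ :=
    hr.not_le_of_finite_sdiff (by rwa [sdiff_compl, inf_comm]) (by rwa [Set.compl_union] at hd)
  exact hXY' (hr.trans hX (hr.trans ((hr.total _ _).resolve_left hYX') hY))

end IsAnonymousUAPOrder

/-- For strictly monotone `s` with `s 0 = 0`, the `m` with `s m ≤ n < s (m + 1)`. -/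
def blockIndex (s : ℕ → ℕ) (n : ℕ) : ℕ := Nat.findGreatest (fun m => s m ≤ n) n

section blockIndex

variable {s : ℕ → ℕ}

theorem gc_blockIndex (hs : StrictMono s) (h0 : s 0 = 0) : GaloisConnection s (blockIndex s) :=
  fun m n => ⟨fun h => Nat.le_findGreatest ((hs.id_le m).trans h) h, fun h =>
    (hs.monotone h).trans (Nat.findGreatest_spec (P := (s · ≤ n)) (Nat.zero_le n) (by simp [h0]))⟩

theorem blockIndex_eq_iff (hs : StrictMono s) (h0 : s 0 = 0) {m n : ℕ} :
    blockIndex s n = m ↔ s m ≤ n ∧ n < s (m + 1) := by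
  rw [(gc_blockIndex hs h0).le_iff_le, (gc_blockIndex hs h0).lt_iff_lt]
  omega

theorem finite_preimage_blockIndex (hs : StrictMono s) (h0 : s 0 = 0) {J : Set ℕ}
    (hJ : J.Finite) : (blockIndex s ⁻¹' J).Finite := by
  obtain ⟨k, hk⟩ := hJ.bddAbove
  exact (Set.finite_Iio (s (k + 1))).subset fun n hn =>
    (gc_blockIndex hs h0).lt_iff_lt.2 (Nat.lt_succ_of_le (hk hn))

theorem strictMono_of_two_mul_lt (hs : ∀ m, 2 * s m < s (m + 1)) : StrictMono s :=
  strictMono_nat_of_lt_succ fun m => by have := hs m; omega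

theorem upperDensity_preimage_blockIndex_pos (hs : ∀ m, 2 * s m < s (m + 1)) (h0 : s 0 = 0)
    {J : Set ℕ} (hJ : J.Infinite) : 0 < upperDensity (blockIndex s ⁻¹' J) := by
  have hmono := strictMono_of_two_mul_lt hs
  refine one_half_pos.trans_le (le_upperDensity_of_frequently (frequently_atTop.2 fun N => ?_))
  obtain ⟨m, hmJ, hNm⟩ := hJ.exists_gt N
  have hms : m ≤ s m := hmono.id_le m
  have hsm := hs m
  set n := s (m + 1) - 1
  have hblock : Set.Ico (s m) (s (m + 1)) ⊆ blockIndex s ⁻¹' J ∩ Set.Icc 1 n := fun k hk => by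
    have hk' := Set.mem_Ico.1 hk
    refine ⟨?_, Set.mem_Icc.2 ⟨by omega, by omega⟩⟩
    rwa [Set.mem_preimage, (blockIndex_eq_iff hmono h0).2 hk']
  have hcard : s (m + 1) - s m ≤ (blockIndex s ⁻¹' J ∩ Set.Icc 1 n).ncard := by
    simpa [← Finset.coe_Ico, Set.ncard_coe_finset] using
      Set.ncard_le_ncard hblock ((Set.finite_Icc 1 n).inter_of_right _)
  refine ⟨n, by omega, ?_⟩
  rw [countingRatio, Nat.card_coe_set_eq, le_div_iff₀ (by norm_cast; omega)]
  have : (n : ℝ) ≤ 2 * (blockIndex s ⁻¹' J ∩ Set.Icc 1 n).ncard := by norm_cast; omega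
  linarith

end blockIndex

/-- The set `W(A)`: for `A = {a₀ < a₁ < ⋯}` this is `[a₀, a₁) ∪ [a₂, a₃) ∪ ⋯`. -/
def alternatingUnion (A : Set ℕ) : Set ℕ := {n | Odd (A ∩ Set.Iic n).ncard}

open scoped symmDiff in
def jumps (I : Set ℕ) : Set ℕ := I ∆ ((· + 1) '' I)

theorem odd_ncard_inter_Iic_succ_iff (E : Set ℕ) (n : ℕ) :
    Odd (E ∩ Set.Iic (n + 1)).ncard ↔ (Odd (E ∩ Set.Iic n).ncard ↔ n + 1 ∉ E) := by
  rw [← Order.succ_eq_add_one, Order.Iic_succ, Order.succ_eq_add_one]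
  by_cases h : n + 1 ∈ E
  · rw [Set.inter_insert_of_mem h, Set.ncard_insert_of_notMem (by simp)
      ((Set.finite_Iic n).inter_of_right E), Nat.odd_add_one]
    tauto
  · rw [Set.inter_insert_of_notMem h]
    tauto

theorem zero_mem_jumps {I : Set ℕ} : 0 ∈ jumps I ↔ 0 ∈ I := by
  simp [jumps, Set.mem_symmDiff]

theorem succ_mem_jumps {I : Set ℕ} {n : ℕ} : n + 1 ∈ jumps I ↔ ¬ (n + 1 ∈ I ↔ n ∈ I) := by
  simp only [jumps, Set.mem_symmDiff, Set.mem_image, Nat.add_right_cancel_iff, exists_eq_right]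
  tauto

theorem odd_ncard_inter_Iic_zero_iff (E : Set ℕ) : Odd (E ∩ Set.Iic 0).ncard ↔ 0 ∈ E := by
  have : Set.Iic 0 = {0} := Set.ext fun n => by simp
  by_cases h : 0 ∈ E <;> simp [h, this]

theorem alternatingUnion_jumps (I : Set ℕ) : alternatingUnion (jumps I) = I := by
  ext n
  induction n with
  | zero => exact (odd_ncard_inter_Iic_zero_iff _).trans zero_mem_jumps
  | succ n ih =>
    change Odd _ ↔ _ at ih ⊢
    rw [odd_ncard_inter_Iic_succ_iff, ih, succ_mem_jumps]
    tauto

theorem alternatingUnion_image {s : ℕ → ℕ} (hs : StrictMono s) (h0 : s 0 = 0) (E : Set ℕ) :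
    alternatingUnion (s '' E) = blockIndex s ⁻¹' alternatingUnion E := by
  have gc := gc_blockIndex hs h0
  ext n
  have : s '' E ∩ Set.Iic n = s '' (E ∩ Set.Iic (blockIndex s n)) := by
    ext x
    constructor
    · rintro ⟨⟨e, he, rfl⟩, hx⟩
      exact ⟨e, ⟨he, (gc e n).1 hx⟩, rfl⟩
    · rintro ⟨e, ⟨he, hle⟩, rfl⟩
      exact ⟨⟨e, he, rfl⟩, (gc e n).2 hle⟩
  change Odd _ ↔ Odd _
  rw [this, Set.ncard_image_of_injective _ hs.injective]

theorem infinite_jumps {I : Set ℕ} (hI : I.Infinite) (hIc : Iᶜ.Infinite) : (jumps I).Infinite := by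
  intro hfin
  obtain ⟨N, hN⟩ := hfin.bddAbove
  have hconst : ∀ m ≥ N, (m ∈ I ↔ N ∈ I) := by
    intro m hm
    induction m, hm using Nat.le_induction with
    | base => rfl
    | succ m hm ih =>
      have hm' : m + 1 ∉ jumps I := fun h => by have := hN h; omega
      rwa [succ_mem_jumps, not_not, ih] at hm'
  by_cases hNI : N ∈ I
  · exact hIc ((Set.finite_Iio N).subset fun m hm =>
      not_le.1 fun h => hm ((hconst m h).2 hNI))
  · exact hI ((Set.finite_Iio N).subset fun m hm =>
      not_le.1 fun h => hNI ((hconst m h).1 hm))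

theorem exists_two_mul_lt_seq {T : Set ℕ} (hT : T.Infinite) :
    ∃ s : ℕ → ℕ, s 0 = 0 ∧ (∀ m, s (m + 1) ∈ T) ∧ ∀ m, 2 * s m < s (m + 1) := by
  choose f hfT hf using hT.exists_gt
  exact ⟨fun m => Nat.rec 0 (fun _ x => f (2 * x)) m, rfl, fun _ => hfT _, fun _ => hf _⟩

theorem exists_subset_alternatingUnion_eq {T : Set ℕ} {s : ℕ → ℕ} (hs : StrictMono s)
    (h0 : s 0 = 0) (hsT : ∀ m, s (m + 1) ∈ T) {I : Set ℕ} (hI0 : 0 ∉ I) (hI : I.Infinite)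
    (hIc : Iᶜ.Infinite) : ∃ A ⊆ T, A.Infinite ∧ alternatingUnion A = blockIndex s ⁻¹' I := by
  refine ⟨s '' jumps I, ?_, (infinite_jumps hI hIc).image hs.injective.injOn,
    by rw [alternatingUnion_image hs h0, alternatingUnion_jumps]⟩
  rintro _ ⟨m, hm, rfl⟩
  obtain ⟨k, rfl⟩ := Nat.exists_eq_succ_of_ne_zero fun h => hI0 (zero_mem_jumps.1 (h ▸ hm))
  exact hsT k

namespace IsAnonymousUAPOrder

variable {r : Set ℕ → Set ℕ → Prop}

theorem not_and_le_compl_preimage (hr : IsAnonymousUAPOrder r) {s : ℕ → ℕ}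
    (hs : ∀ m, 2 * s m < s (m + 1)) (h0 : s 0 = 0) {I J : Set ℕ} (hIJ : (I ∩ J).Finite)
    (hc : (I ∪ J)ᶜ.Infinite) :
    ¬ (r (blockIndex s ⁻¹' I) (blockIndex s ⁻¹' I)ᶜ ∧
      r (blockIndex s ⁻¹' J) (blockIndex s ⁻¹' J)ᶜ) := by
  refine hr.not_and_le_compl ?_ ?_
  · rw [← Set.preimage_inter]
    exact finite_preimage_blockIndex (strictMono_of_two_mul_lt hs) h0 hIJ
  · rw [← Set.preimage_union, ← Set.preimage_compl]
    exact upperDensity_preimage_blockIndex_pos hs h0 hc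

section Subsets

variable {T : Set ℕ} {s : ℕ → ℕ}

theorem exists_subset_not_le_compl (hr : IsAnonymousUAPOrder r) (hs : ∀ m, 2 * s m < s (m + 1))
    (h0 : s 0 = 0) (hsT : ∀ m, s (m + 1) ∈ T) :
    ∃ A ⊆ T, A.Infinite ∧ ¬ r (alternatingUnion A)ᶜ (alternatingUnion A) := by
  by_contra! h
  -- `m ≠ 0` since `W` of a subset of `T` never meets the block `[s 0, s 1)`.
  obtain ⟨A, hAT, hA, hWA⟩ := exists_subset_alternatingUnion_eq (strictMono_of_two_mul_lt hs) h0
    hsT (I := {m | m % 3 ≠ 1 ∧ m ≠ 0}) (by simp)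
    (Set.infinite_of_forall_exists_gt fun N => ⟨3 * N + 3, by simp, by omega⟩)
    (Set.infinite_of_forall_exists_gt fun N => ⟨3 * N + 4, by simp, by omega⟩)
  obtain ⟨B, hBT, hB, hWB⟩ := exists_subset_alternatingUnion_eq (strictMono_of_two_mul_lt hs) h0
    hsT (I := {m | m % 3 ≠ 2 ∧ m ≠ 0}) (by simp)
    (Set.infinite_of_forall_exists_gt fun N => ⟨3 * N + 3, by simp, by omega⟩)
    (Set.infinite_of_forall_exists_gt fun N => ⟨3 * N + 5, by simp, by omega⟩)
  refine hr.not_and_le_compl_preimage hs h0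
    (I := {m | m % 3 ≠ 1 ∧ m ≠ 0}ᶜ) (J := {m | m % 3 ≠ 2 ∧ m ≠ 0}ᶜ)
    ((Set.finite_singleton 0).subset fun m hm => Set.mem_singleton_iff.2 (by
      simp only [Set.mem_inter_iff, Set.mem_compl_iff, Set.mem_ofPred_eq] at hm; omega))
    (Set.infinite_of_forall_exists_gt fun N => ⟨3 * N + 3, by simp, by omega⟩) ?_
  simp only [Set.preimage_compl, compl_compl, ← hWA, ← hWB]
  exact ⟨h A hAT hA, h B hBT hB⟩

theorem exists_subset_le_compl (hr : IsAnonymousUAPOrder r) (hs : ∀ m, 2 * s m < s (m + 1))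
    (h0 : s 0 = 0) (hsT : ∀ m, s (m + 1) ∈ T) :
    ∃ A ⊆ T, A.Infinite ∧ r (alternatingUnion A)ᶜ (alternatingUnion A) := by
  by_contra! h
  obtain ⟨A, hAT, hA, hWA⟩ := exists_subset_alternatingUnion_eq (strictMono_of_two_mul_lt hs) h0
    hsT (I := {m | m % 3 = 1}) (by simp)
    (Set.infinite_of_forall_exists_gt fun N => ⟨3 * N + 4, by simp, by omega⟩)
    (Set.infinite_of_forall_exists_gt fun N => ⟨3 * N + 3, by simp, by omega⟩)
  obtain ⟨B, hBT, hB, hWB⟩ := exists_subset_alternatingUnion_eq (strictMono_of_two_mul_lt hs) h0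
    hsT (I := {m | m % 3 = 2}) (by simp)
    (Set.infinite_of_forall_exists_gt fun N => ⟨3 * N + 5, by simp, by omega⟩)
    (Set.infinite_of_forall_exists_gt fun N => ⟨3 * N + 3, by simp, by omega⟩)
  refine hr.not_and_le_compl_preimage hs h0 (I := {m | m % 3 = 1}) (J := {m | m % 3 = 2})
    (Set.finite_empty.subset fun m hm => by
      simp only [Set.mem_inter_iff, Set.mem_ofPred_eq] at hm; omega)
    (Set.infinite_of_forall_exists_gt fun N => ⟨3 * N + 3, by simp, by omega⟩) ?_
  rw [← hWA, ← hWB]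
  exact ⟨(hr.total _ _).resolve_right (h A hAT hA), (hr.total _ _).resolve_right (h B hBT hB)⟩

end Subsets

theorem exists_nonRamsey (hr : IsAnonymousUAPOrder r) :
    ∃ Γ : Set (Set ℕ), (∀ A ∈ Γ, A.Infinite) ∧ ∀ T : Set ℕ, T.Infinite →
      (∃ S ⊆ T, S.Infinite ∧ S ∈ Γ) ∧ (∃ S ⊆ T, S.Infinite ∧ S ∉ Γ) := by
  refine ⟨{A | A.Infinite ∧ ¬ r (alternatingUnion A)ᶜ (alternatingUnion A)}, fun A hA => hA.1,
    fun T hT => ?_⟩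
  obtain ⟨s, h0, hsT, hs⟩ := exists_two_mul_lt_seq hT
  obtain ⟨A, hAT, hA, hAΓ⟩ := hr.exists_subset_not_le_compl hs h0 hsT
  obtain ⟨B, hBT, hB, hBΓ⟩ := hr.exists_subset_le_compl hs h0 hsT
  exact ⟨⟨A, hAT, hA, hA, hAΓ⟩, ⟨B, hBT, hB, fun h => h.2 hBΓ⟩⟩

end IsAnonymousUAPOrder

open Classical in
noncomputable def indicatorStream (a b : ℝ) (P : Set ℕ) (n : ℕ) : ℝ := if n ∈ P then b else a

section indicatorStream

variable {a b : ℝ} {P Q : Set ℕ}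

theorem indicatorStream_eq_or (a b : ℝ) (P : Set ℕ) (i : ℕ) :
    indicatorStream a b P i = a ∨ indicatorStream a b P i = b := by
  by_cases h : i ∈ P <;> simp [indicatorStream, h]

theorem indicatorStream_preimage (a b : ℝ) (P : Set ℕ) (f : ℕ → ℕ) :
    indicatorStream a b (f ⁻¹' P) = indicatorStream a b P ∘ f := rfl

theorem indicatorStream_mono (hab : a ≤ b) (hQP : Q ⊆ P) (i : ℕ) :
    indicatorStream a b Q i ≤ indicatorStream a b P i := by
  by_cases hQ : i ∈ Q
  · simp [indicatorStream, hQ, hQP hQ]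
  · by_cases hP : i ∈ P <;> simp [indicatorStream, hQ, hP, hab]

theorem indicatorStream_lt (hab : a < b) {i : ℕ} (hi : i ∈ P \ Q) :
    indicatorStream a b Q i < indicatorStream a b P i := by
  simpa [indicatorStream, hi.1, hi.2] using hab

end indicatorStream

/-- if there is a social welfare order (complete and transitive
relation) on {a,b}^ℕ (a < b) satisfying Upper Asymptotic Pareto and Anonymity,
then there exists a non-Ramsey collection of infinite subsets of ℕ. -/
theorem stmt_12 (a b : ℝ) (hab : a < b)
    (R : (ℕ → ℝ) → (ℕ → ℝ) → Prop)
    (htotal : ∀ x y : ℕ → ℝ, (∀ i, x i = a ∨ x i = b) → (∀ i, y i = a ∨ y i = b) →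
      (R x y ∨ R y x))
    (htrans : ∀ x y z : ℕ → ℝ, (∀ i, x i = a ∨ x i = b) → (∀ i, y i = a ∨ y i = b) →
      (∀ i, z i = a ∨ z i = b) → R x y → R y z → R x z)
    (hAN : ∀ x : ℕ → ℝ, (∀ i, x i = a ∨ x i = b) → ∀ i j : ℕ,
      R x (x ∘ Equiv.swap i j) ∧ R (x ∘ Equiv.swap i j) x)
    (hUAP : ∀ x y : ℕ → ℝ, (∀ i, x i = a ∨ x i = b) → (∀ i, y i = a ∨ y i = b) →
      (∀ i, y i ≤ x i) →
      ∀ S : Set ℕ, 0 < upperDensity S → (∀ i ∈ S, y i < x i) → (R x y ∧ ¬ R y x)) :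
    ∃ Γ : Set (Set ℕ), (∀ A ∈ Γ, A.Infinite) ∧
      ∀ T : Set ℕ, T.Infinite →
        (∃ S ⊆ T, S.Infinite ∧ S ∈ Γ) ∧ (∃ S ⊆ T, S.Infinite ∧ S ∉ Γ) := by
  have hval := indicatorStream_eq_or a b
  refine IsAnonymousUAPOrder.exists_nonRamsey
    (r := fun P Q => R (indicatorStream a b P) (indicatorStream a b Q)) ⟨?_, ?_, ?_, ?_⟩
  · exact fun P Q => htotal _ _ (hval P) (hval Q)
  · exact fun hPQ hQS => htrans _ _ _ (hval _) (hval _) (hval _) hPQ hQS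
  · intro P i j
    rw [indicatorStream_preimage]
    exact (hAN _ (hval P) i j).1
  · intro P Q hQP hd
    exact (hUAP _ _ (hval P) (hval Q) (indicatorStream_mono hab.le hQP) _ hd
      fun i hi => indicatorStream_lt hab hi).2
end
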